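/- (One-step improvement without commutability, core of Theorem 6.1.) Fix a task t and let Σ_t = U_t Γ_t U_tᵀ be an eigendecomposition with U_t orthogonal and Γ_t = diag(γ_1,…,γ_p), γ_j ≥ 0. Let v be a square-integrable random vector in ℝ^p independent of ε_t such that E[((U_tᵀ(v − w*))_j)²] > 0 for every j with γ_j > 0. Then there exists a positive definite diagonal matrix Λ_t such that, taking H_t := U_t Λ_t U_tᵀ, the generalized ℓ₂-regularized update ŵ := argmin_w { (1/n_t)‖X_t w − y_t‖² + (w − v)ᵀ H_t (w − v) } satisfies E‖ŵ − w*‖² ≤ E‖v − w*‖², with strict inequality whenever γ_j > 0 for at least one j. -/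

import Mathlib

open MeasureTheory Matrix ProbabilityTheory

/-!
Rotating by `U` diagonalises both the data-fit term and the penalty `U Λ Uᵀ`, so the regularized
problem splits into `p` scalar ridge problems. In direction `j` the new error is
`(ξ_j + λ_j z_j) / (γ_j + λ_j)`, where `z = Uᵀ (v - w*)` is the old error and `ξ = Uᵀ Xᵀ ε / n` is
a noise term of variance `σ² γ_j / n`, uncorrelated with `z` by independence. Its mean square is
`(σ² γ_j / n + λ_j² E z_j²) / (γ_j + λ_j)²`; the choice `λ_j = σ² / (n E z_j²)` turns this into
`E z_j² · λ_j / (γ_j + λ_j)`, strictly below `E z_j²` when `γ_j > 0` and equal to it when `γ_j = 0`.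
-/

theorem mul_sq_sub_two_mul_add_mul_sub_sq {γ lam s t ξ : ℝ} (h : γ + lam ≠ 0) :
    γ * s ^ 2 - 2 * s * ξ + lam * (s - t) ^ 2
      = (γ + lam) * (s - (ξ + lam * t) / (γ + lam)) ^ 2
        + (lam * t ^ 2 - (ξ + lam * t) ^ 2 / (γ + lam)) := by
  field_simp
  ring

theorem shrinkage_risk_lt {γ a s : ℝ} (hγ : 0 < γ) (ha : 0 < a) (hs : 0 < s) :
    (s * γ + (s / a) ^ 2 * a) / (γ + s / a) ^ 2 < a := by
  have key : (s * γ + (s / a) ^ 2 * a) / (γ + s / a) ^ 2 = a * s / (γ * a + s) := by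
    field_simp
  rw [key, div_lt_iff₀ (by positivity)]
  nlinarith [mul_pos (mul_pos ha ha) hγ]

section Rotation

variable {m R : Type*} [Fintype m] [CommRing R]

theorem dotProduct_transpose_mulVec_transpose_mulVec [DecidableEq m] {U : Matrix m m R}
    (hU : U * Uᵀ = 1) (a b : m → R) : (Uᵀ *ᵥ a) ⬝ᵥ (Uᵀ *ᵥ b) = a ⬝ᵥ b := by
  rw [mulVec_transpose, dotProduct_mulVec, vecMul_vecMul, hU, vecMul_one]

theorem sum_sq_transpose_mulVec [DecidableEq m] {U : Matrix m m R} (hU : U * Uᵀ = 1)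
    (a : m → R) : ∑ j, (Uᵀ *ᵥ a) j ^ 2 = ∑ j, a j ^ 2 := by
  simpa only [dotProduct, sq] using dotProduct_transpose_mulVec_transpose_mulVec hU a a

theorem dotProduct_mul_diagonal_mul_transpose_mulVec [DecidableEq m] (U : Matrix m m R)
    (g a : m → R) : a ⬝ᵥ ((U * diagonal g * Uᵀ) *ᵥ a) = ∑ j, g j * (Uᵀ *ᵥ a) j ^ 2 := by
  rw [← mulVec_mulVec, ← mulVec_mulVec, dotProduct_mulVec, ← mulVec_transpose]
  simp only [dotProduct, mulVec_diagonal, sq]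
  exact Finset.sum_congr rfl fun j _ => by ring

theorem sum_sq_mulVec_sub {k : Type*} [Fintype k] (Z : Matrix k m R) (s : m → R) (e : k → R) :
    ∑ i, (Z *ᵥ s - e) i ^ 2 = s ⬝ᵥ ((Zᵀ * Z) *ᵥ s) - 2 * (s ⬝ᵥ (Zᵀ *ᵥ e)) + e ⬝ᵥ e := by
  have hquad : (Z *ᵥ s) ⬝ᵥ (Z *ᵥ s) = s ⬝ᵥ ((Zᵀ * Z) *ᵥ s) := by
    rw [← mulVec_mulVec, dotProduct_mulVec, ← mulVec_transpose, dotProduct_comm]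
  have hcross : (Z *ᵥ s) ⬝ᵥ e = s ⬝ᵥ (Zᵀ *ᵥ e) := by
    rw [dotProduct_comm, dotProduct_mulVec, ← mulVec_transpose, dotProduct_comm]
  rw [← hquad, ← hcross]
  simp only [dotProduct, Pi.sub_apply, Finset.mul_sum, ← Finset.sum_sub_distrib,
    ← Finset.sum_add_distrib]
  exact Finset.sum_congr rfl fun i _ => by ring

end Rotation

section Design

variable {n p : ℕ} (X : Matrix (Fin n) (Fin p) ℝ) (U : Matrix (Fin p) (Fin p) ℝ)

theorem transpose_mul_mul_self_eq_smul_diagonal {γ : Fin p → ℝ} (hn : (n : ℝ) ≠ 0)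
    (hU : Uᵀ * U = 1) (hSig : (n : ℝ)⁻¹ • (Xᵀ * X) = U * diagonal γ * Uᵀ) :
    (X * U)ᵀ * (X * U) = (n : ℝ) • diagonal γ := by
  have hXX : Xᵀ * X = (n : ℝ) • (U * diagonal γ * Uᵀ) := by
    rw [← hSig, smul_smul, mul_inv_cancel₀ hn, one_smul]
  calc (X * U)ᵀ * (X * U) = Uᵀ * (Xᵀ * X) * U := by
        rw [transpose_mul, Matrix.mul_assoc, Matrix.mul_assoc, Matrix.mul_assoc]
    _ = (n : ℝ) • ((Uᵀ * U) * diagonal γ * (Uᵀ * U)) := by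
        rw [hXX, Matrix.mul_smul, Matrix.smul_mul]
        simp only [Matrix.mul_assoc]
    _ = (n : ℝ) • diagonal γ := by rw [hU, Matrix.one_mul, Matrix.mul_one]

noncomputable def regularizedLoss (y : Fin n → ℝ) (H : Matrix (Fin p) (Fin p) ℝ)
    (v w : Fin p → ℝ) : ℝ :=
  (n : ℝ)⁻¹ * ∑ i, (X *ᵥ w - y) i ^ 2 + (w - v) ⬝ᵥ (H *ᵥ (w - v))

noncomputable def rotatedNoise (e : Fin n → ℝ) : Fin p → ℝ :=
  (n : ℝ)⁻¹ • ((X * U)ᵀ *ᵥ e)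

noncomputable def rotatedMinimizer (γ lam w₀ v : Fin p → ℝ) (e : Fin n → ℝ) (j : Fin p) : ℝ :=
  (rotatedNoise X U e j + lam j * (Uᵀ *ᵥ (v - w₀)) j) / (γ j + lam j)

variable {X U}

theorem regularizedLoss_eq_sum {γ : Fin p → ℝ} (hn : (n : ℝ) ≠ 0) (hU : Uᵀ * U = 1)
    (hSig : (n : ℝ)⁻¹ • (Xᵀ * X) = U * diagonal γ * Uᵀ) (lam w₀ v w : Fin p → ℝ)
    (e : Fin n → ℝ) :
    regularizedLoss X (X *ᵥ w₀ + e) (U * diagonal lam * Uᵀ) v w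
      = ∑ j, (γ j * (Uᵀ *ᵥ (w - w₀)) j ^ 2 - 2 * (Uᵀ *ᵥ (w - w₀)) j * rotatedNoise X U e j
          + lam j * ((Uᵀ *ᵥ (w - w₀)) j - (Uᵀ *ᵥ (v - w₀)) j) ^ 2)
        + (n : ℝ)⁻¹ * ∑ i, e i ^ 2 := by
  have hU' : U * Uᵀ = 1 := mul_eq_one_comm.mp hU
  have hresid : X *ᵥ w - (X *ᵥ w₀ + e) = (X * U) *ᵥ (Uᵀ *ᵥ (w - w₀)) - e := by
    rw [mulVec_mulVec, Matrix.mul_assoc, hU', Matrix.mul_one, mulVec_sub]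
    abel
  have hreg : Uᵀ *ᵥ (w - v) = Uᵀ *ᵥ (w - w₀) - Uᵀ *ᵥ (v - w₀) := by
    rw [← mulVec_sub, sub_sub_sub_cancel_right]
  rw [regularizedLoss, hresid, sum_sq_mulVec_sub,
    transpose_mul_mul_self_eq_smul_diagonal X U hn hU hSig,
    dotProduct_mul_diagonal_mul_transpose_mulVec, hreg]
  simp only [rotatedNoise, smul_mulVec, mulVec_diagonal, dotProduct,
    Pi.smul_apply, Pi.sub_apply, smul_eq_mul]
  set s := Uᵀ *ᵥ (w - w₀)
  set ξ := (X * U)ᵀ *ᵥ e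
  have hquad : (n : ℝ)⁻¹ * ∑ j, s j * (n * (γ j * s j)) = ∑ j, γ j * s j ^ 2 := by
    rw [Finset.mul_sum]
    exact Finset.sum_congr rfl fun j _ => by field_simp
  have hcross : (n : ℝ)⁻¹ * (2 * ∑ j, s j * ξ j) = ∑ j, 2 * s j * ((n : ℝ)⁻¹ * ξ j) := by
    rw [Finset.mul_sum, Finset.mul_sum]
    exact Finset.sum_congr rfl fun j _ => by ring
  have hnoise : ∑ i, e i * e i = ∑ i, e i ^ 2 := by simp only [sq]
  simp only [Finset.sum_add_distrib, Finset.sum_sub_distrib]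
  linear_combination hquad - hcross + (n : ℝ)⁻¹ * hnoise

end Design

theorem eq_of_sum_mul_sq_sub_nonpos {ι : Type*} [Fintype ι] {c x y : ι → ℝ}
    (hc : ∀ j, 0 < c j) (h : ∑ j, c j * (x j - y j) ^ 2 ≤ 0) : x = y := by
  have hnonneg : ∀ j ∈ Finset.univ, 0 ≤ c j * (x j - y j) ^ 2 := fun j _ => by
    have := hc j
    positivity
  have hzero := (Finset.sum_eq_zero_iff_of_nonneg hnonneg).1
    (le_antisymm h (Finset.sum_nonneg hnonneg))
  funext j
  have := hzero j (Finset.mem_univ j)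
  rw [mul_eq_zero, pow_eq_zero_iff two_ne_zero, sub_eq_zero] at this
  exact this.resolve_left (hc j).ne'

section Minimizer

variable {n p : ℕ} {X : Matrix (Fin n) (Fin p) ℝ} {U : Matrix (Fin p) (Fin p) ℝ}
  {γ lam : Fin p → ℝ}

theorem exists_regularizedLoss_eq_sum_mul_sq (hn : (n : ℝ) ≠ 0) (hU : Uᵀ * U = 1)
    (hSig : (n : ℝ)⁻¹ • (Xᵀ * X) = U * diagonal γ * Uᵀ) (hne : ∀ j, γ j + lam j ≠ 0)
    (w₀ v : Fin p → ℝ) (e : Fin n → ℝ) :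
    ∃ C, ∀ w, regularizedLoss X (X *ᵥ w₀ + e) (U * diagonal lam * Uᵀ) v w
      = ∑ j, (γ j + lam j) * ((Uᵀ *ᵥ (w - w₀)) j - rotatedMinimizer X U γ lam w₀ v e j) ^ 2
        + C := by
  refine ⟨∑ j, (lam j * (Uᵀ *ᵥ (v - w₀)) j ^ 2
      - (rotatedNoise X U e j + lam j * (Uᵀ *ᵥ (v - w₀)) j) ^ 2 / (γ j + lam j))
      + (n : ℝ)⁻¹ * ∑ i, e i ^ 2, fun w => ?_⟩
  rw [regularizedLoss_eq_sum hn hU hSig, ← add_assoc, ← Finset.sum_add_distrib]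
  congr 1
  exact Finset.sum_congr rfl fun j _ => mul_sq_sub_two_mul_add_mul_sub_sq (hne j)

theorem transpose_mulVec_sub_eq_rotatedMinimizer (hn : (n : ℝ) ≠ 0) (hU : Uᵀ * U = 1)
    (hSig : (n : ℝ)⁻¹ • (Xᵀ * X) = U * diagonal γ * Uᵀ) (hpos : ∀ j, 0 < γ j + lam j)
    {w₀ v ŵ : Fin p → ℝ} {e : Fin n → ℝ}
    (hmin : ∀ w, regularizedLoss X (X *ᵥ w₀ + e) (U * diagonal lam * Uᵀ) v ŵ
      ≤ regularizedLoss X (X *ᵥ w₀ + e) (U * diagonal lam * Uᵀ) v w) :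
    Uᵀ *ᵥ (ŵ - w₀) = rotatedMinimizer X U γ lam w₀ v e := by
  obtain ⟨C, hC⟩ := exists_regularizedLoss_eq_sum_mul_sq hn hU hSig (fun j => (hpos j).ne') w₀ v e
  set m := rotatedMinimizer X U γ lam w₀ v e
  have hrot : Uᵀ *ᵥ (w₀ + U *ᵥ m - w₀) = m := by
    rw [add_sub_cancel_left, mulVec_mulVec, hU, one_mulVec]
  have hle := hmin (w₀ + U *ᵥ m)
  simp only [hC, hrot, sub_self, ne_eq, OfNat.ofNat_ne_zero, not_false_eq_true, zero_pow,
    mul_zero, Finset.sum_const_zero, zero_add, add_le_iff_nonpos_left] at hle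
  exact eq_of_sum_mul_sq_sub_nonpos hpos hle

end Minimizer

section Moments

variable {Ω ι : Type*} [MeasurableSpace Ω] {μ : Measure Ω} [Fintype ι]

theorem memLp_dotProduct {q : ENNReal} {f : Ω → ι → ℝ} (hf : ∀ i, MemLp (fun ω => f ω i) q μ)
    (c : ι → ℝ) : MemLp (fun ω => c ⬝ᵥ f ω) q μ :=
  memLp_finsetSum _ fun i _ => (hf i).const_mul (c i)

theorem integral_dotProduct_eq_zero {ε : Ω → ι → ℝ} (hε : ∀ i, Integrable (fun ω => ε ω i) μ)
    (hmean : ∀ i, ∫ ω, ε ω i ∂μ = 0) (c : ι → ℝ) : ∫ ω, c ⬝ᵥ ε ω ∂μ = 0 := by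
  simp only [dotProduct]
  rw [integral_finsetSum _ fun i _ => (hε i).const_mul (c i)]
  simp [integral_const_mul, hmean]

theorem integral_dotProduct_sq [DecidableEq ι] {ε : Ω → ι → ℝ} {σ2 : ℝ}
    (hε : ∀ i, MemLp (fun ω => ε ω i) 2 μ)
    (hcov : ∀ i i', ∫ ω, ε ω i * ε ω i' ∂μ = if i = i' then σ2 else 0) (c : ι → ℝ) :
    ∫ ω, (c ⬝ᵥ ε ω) ^ 2 ∂μ = σ2 * (c ⬝ᵥ c) := by
  have hint : ∀ i i', Integrable (fun ω => c i * c i' * (ε ω i * ε ω i')) μ := fun i i' =>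
    ((hε i).integrable_mul (hε i')).const_mul _
  calc ∫ ω, (c ⬝ᵥ ε ω) ^ 2 ∂μ = ∫ ω, ∑ i, ∑ i', c i * c i' * (ε ω i * ε ω i') ∂μ := by
        congr 1
        funext ω
        rw [sq, dotProduct, Finset.sum_mul_sum]
        exact Finset.sum_congr rfl fun i _ => Finset.sum_congr rfl fun i' _ => by ring
    _ = ∑ i, ∑ i', c i * c i' * ∫ ω, ε ω i * ε ω i' ∂μ := by
        rw [integral_finsetSum _ fun i _ => integrable_finsetSum _ fun i' _ => hint i i']
        refine Finset.sum_congr rfl fun i _ => ?_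
        rw [integral_finsetSum _ fun i' _ => hint i i']
        exact Finset.sum_congr rfl fun i' _ => integral_const_mul _ _
    _ = σ2 * (c ⬝ᵥ c) := by
        simp only [hcov, mul_ite, mul_zero, Finset.sum_ite_eq, Finset.mem_univ, if_true,
          dotProduct, Finset.mul_sum]
        exact Finset.sum_congr rfl fun i _ => by ring

theorem integral_add_sq_of_integral_mul_eq_zero {f g : Ω → ℝ} (hf : MemLp f 2 μ)
    (hg : MemLp g 2 μ) (hfg : ∫ ω, f ω * g ω ∂μ = 0) :
    ∫ ω, (f ω + g ω) ^ 2 ∂μ = ∫ ω, f ω ^ 2 ∂μ + ∫ ω, g ω ^ 2 ∂μ := by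
  have hexpand : (fun ω => (f ω + g ω) ^ 2)
      = fun ω => f ω ^ 2 + 2 * (f ω * g ω) + g ω ^ 2 := by
    funext ω
    ring
  have hfg_int : Integrable (fun ω => 2 * (f ω * g ω)) μ := (hf.integrable_mul hg).const_mul 2
  have hsum_int : Integrable (fun ω => f ω ^ 2 + 2 * (f ω * g ω)) μ :=
    hf.integrable_sq.add hfg_int
  rw [hexpand, integral_add hsum_int hg.integrable_sq,
    integral_add hf.integrable_sq hfg_int, integral_const_mul, hfg, mul_zero, add_zero]

theorem ProbabilityTheory.IndepFun.integral_mul_dotProduct_eq_zero {κ : Type*}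
    [MeasurableSpace κ] {V : Ω → κ} {ε : Ω → ι → ℝ} (hindep : IndepFun V ε μ) {f : κ → ℝ}
    (hf : Measurable f) (hfV : AEStronglyMeasurable (fun ω => f (V ω)) μ)
    (hε : ∀ i, Integrable (fun ω => ε ω i) μ) (hmean : ∀ i, ∫ ω, ε ω i ∂μ = 0) (c : ι → ℝ) :
    ∫ ω, f (V ω) * (c ⬝ᵥ ε ω) ∂μ = 0 := by
  have hc : Measurable fun x : ι → ℝ => c ⬝ᵥ x :=
    Finset.measurable_sum _ fun i _ => (measurable_pi_apply i).const_mul _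
  refine ((hindep.comp hf hc).integral_fun_mul_eq_mul_integral hfV
    (memLp_dotProduct (fun i => memLp_one_iff_integrable.2 (hε i)) c).aestronglyMeasurable).trans ?_
  exact mul_eq_zero_of_right _ (integral_dotProduct_eq_zero hε hmean c)

end Moments

section Risk

variable {Ω : Type*} [MeasurableSpace Ω] {μ : Measure Ω} {n p : ℕ}
  {X : Matrix (Fin n) (Fin p) ℝ} {U : Matrix (Fin p) (Fin p) ℝ} {γ : Fin p → ℝ} {σ2 : ℝ}
  {ε : Ω → Fin n → ℝ}

theorem rotatedNoise_apply (e : Fin n → ℝ) (j : Fin p) :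
    rotatedNoise X U e j = ((n : ℝ)⁻¹ • fun i => (X * U) i j) ⬝ᵥ e := by
  rw [smul_dotProduct]
  rfl

theorem integral_rotatedNoise_sq (hn : (n : ℝ) ≠ 0) (hU : Uᵀ * U = 1)
    (hSig : (n : ℝ)⁻¹ • (Xᵀ * X) = U * diagonal γ * Uᵀ)
    (hε : ∀ i, MemLp (fun ω => ε ω i) 2 μ)
    (hcov : ∀ i i', ∫ ω, ε ω i * ε ω i' ∂μ = if i = i' then σ2 else 0) (j : Fin p) :
    ∫ ω, rotatedNoise X U (ε ω) j ^ 2 ∂μ = σ2 / n * γ j := by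
  have hcol : (fun i => (X * U) i j) ⬝ᵥ (fun i => (X * U) i j) = n * γ j := by
    have := congr_fun (congr_fun (transpose_mul_mul_self_eq_smul_diagonal X U hn hU hSig) j) j
    rwa [mul_apply, Matrix.smul_apply, diagonal_apply_eq, smul_eq_mul] at this
  simp only [rotatedNoise_apply]
  rw [integral_dotProduct_sq hε hcov, smul_dotProduct, dotProduct_smul, hcol, smul_eq_mul,
    smul_eq_mul]
  field_simp

theorem integral_sq_rotatedMinimizer [IsFiniteMeasure μ] (hn : (n : ℝ) ≠ 0)
    (hU : Uᵀ * U = 1) (hSig : (n : ℝ)⁻¹ • (Xᵀ * X) = U * diagonal γ * Uᵀ)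
    (hε : ∀ i, MemLp (fun ω => ε ω i) 2 μ) (hmean : ∀ i, ∫ ω, ε ω i ∂μ = 0)
    (hcov : ∀ i i', ∫ ω, ε ω i * ε ω i' ∂μ = if i = i' then σ2 else 0)
    {v : Ω → Fin p → ℝ} (hv : ∀ k, MemLp (fun ω => v ω k) 2 μ) (hindep : IndepFun v ε μ)
    (lam w₀ : Fin p → ℝ) (j : Fin p) :
    ∫ ω, rotatedMinimizer X U γ lam w₀ (v ω) (ε ω) j ^ 2 ∂μ
      = (σ2 / n * γ j + lam j ^ 2 * ∫ ω, (Uᵀ *ᵥ (v ω - w₀)) j ^ 2 ∂μ) / (γ j + lam j) ^ 2 := by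
  set ξ := fun ω => rotatedNoise X U (ε ω) j
  set z := fun ω => lam j * (Uᵀ *ᵥ (v ω - w₀)) j
  have hz : MemLp z 2 μ :=
    (memLp_dotProduct (fun k => (hv k).sub (memLp_const (w₀ k))) (Uᵀ j)).const_mul (lam j)
  have hξ : MemLp ξ 2 μ := by
    simp only [ξ, rotatedNoise_apply]
    exact memLp_dotProduct hε _
  have hcross : ∫ ω, z ω * ξ ω ∂μ = 0 := by
    simp only [z, ξ, rotatedNoise_apply]
    exact hindep.integral_mul_dotProduct_eq_zero (f := fun x => lam j * (Uᵀ *ᵥ (x - w₀)) j)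
      (by fun_prop) hz.aestronglyMeasurable (fun i => (hε i).integrable one_le_two) hmean _
  have hsplit : ∫ ω, (z ω + ξ ω) ^ 2 ∂μ = ∫ ω, z ω ^ 2 ∂μ + ∫ ω, ξ ω ^ 2 ∂μ :=
    integral_add_sq_of_integral_mul_eq_zero hz hξ hcross
  simp only [rotatedMinimizer, div_pow]
  rw [integral_div]
  simp only [z, ξ, add_comm (rotatedNoise X U _ j)] at hsplit ⊢
  rw [hsplit, integral_rotatedNoise_sq hn hU hSig hε hcov, add_comm]
  simp only [mul_pow, integral_const_mul]

theorem integral_sum_sq_sub_eq_sum_integral_sq [IsFiniteMeasure μ] (hU : Uᵀ * U = 1)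
    {f : Ω → Fin p → ℝ} (hf : ∀ k, MemLp (fun ω => f ω k) 2 μ) (c : Fin p → ℝ) :
    ∫ ω, ∑ j, (f ω j - c j) ^ 2 ∂μ = ∑ j, ∫ ω, (Uᵀ *ᵥ (f ω - c)) j ^ 2 ∂μ := by
  have hrot : ∀ ω, ∑ j, (f ω j - c j) ^ 2 = ∑ j, (Uᵀ *ᵥ (f ω - c)) j ^ 2 := fun ω =>
    (sum_sq_transpose_mulVec (mul_eq_one_comm.mp hU) (f ω - c)).symm
  simp only [hrot]
  exact integral_finsetSum _ fun j _ =>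
    (memLp_dotProduct (fun k => (hf k).sub (memLp_const (c k))) (Uᵀ j)).integrable_sq

theorem integral_sum_sq_sub_of_isMin [IsFiniteMeasure μ] (hn : (n : ℝ) ≠ 0)
    (hU : Uᵀ * U = 1) (hSig : (n : ℝ)⁻¹ • (Xᵀ * X) = U * diagonal γ * Uᵀ)
    (hε : ∀ i, MemLp (fun ω => ε ω i) 2 μ) (hmean : ∀ i, ∫ ω, ε ω i ∂μ = 0)
    (hcov : ∀ i i', ∫ ω, ε ω i * ε ω i' ∂μ = if i = i' then σ2 else 0)
    {v : Ω → Fin p → ℝ} (hv : ∀ k, MemLp (fun ω => v ω k) 2 μ) (hindep : IndepFun v ε μ)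
    {lam : Fin p → ℝ} (hpos : ∀ j, 0 < γ j + lam j) (w₀ : Fin p → ℝ)
    {ŵ : Ω → Fin p → ℝ} (hŵ : ∀ k, MemLp (fun ω => ŵ ω k) 2 μ)
    (hmin : ∀ ω w, regularizedLoss X (X *ᵥ w₀ + ε ω) (U * diagonal lam * Uᵀ) (v ω) (ŵ ω)
      ≤ regularizedLoss X (X *ᵥ w₀ + ε ω) (U * diagonal lam * Uᵀ) (v ω) w) :
    ∫ ω, ∑ j, (ŵ ω j - w₀ j) ^ 2 ∂μ
      = ∑ j, (σ2 / n * γ j + lam j ^ 2 * ∫ ω, (Uᵀ *ᵥ (v ω - w₀)) j ^ 2 ∂μ)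
          / (γ j + lam j) ^ 2 := by
  rw [integral_sum_sq_sub_eq_sum_integral_sq hU hŵ]
  refine Finset.sum_congr rfl fun j _ => ?_
  simp only [transpose_mulVec_sub_eq_rotatedMinimizer hn hU hSig hpos (hmin _)]
  exact integral_sq_rotatedMinimizer hn hU hSig hε hmean hcov hv hindep lam w₀ j

end Risk

/-- **One-step improvement without commutability, core of
Theorem 6.1.** For a single task with eigendecomposition `Σ_t = U_t Γ_t U_tᵀ`
and a previous square-integrable estimate `v` independent of the noise, with
`E[((U_tᵀ(v − w*))_j)²] > 0` for every `j` with `γ_j > 0`, there exists a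
positive definite diagonal `Λ_t` such that the generalized ℓ₂-regularized
update with `H_t = U_t Λ_t U_tᵀ` does not increase the estimation error, with
strict decrease whenever some `γ_j > 0`. -/
theorem one_step_improvement_no_commutability
    {Ω : Type} [MeasurableSpace Ω] (μ : Measure Ω) [IsProbabilityMeasure μ]
    (n p : ℕ) (hn : 0 < n)
    (X : Matrix (Fin n) (Fin p) ℝ)
    (U : Matrix (Fin p) (Fin p) ℝ) (hU : Uᵀ * U = 1)
    (γ : Fin p → ℝ) (hγ : ∀ j, 0 ≤ γ j)
    (hSig : (n : ℝ)⁻¹ • (Xᵀ * X) = U * Matrix.diagonal γ * Uᵀ)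
    (wstar : Fin p → ℝ)
    (σ2 : ℝ) (hσ2 : 0 < σ2)
    (ε : Ω → Fin n → ℝ)
    (hεL2 : ∀ i, MemLp (fun ω => ε ω i) 2 μ)
    (hmean : ∀ i, ∫ ω, ε ω i ∂μ = 0)
    (hcov : ∀ i i', ∫ ω, ε ω i * ε ω i' ∂μ = if i = i' then σ2 else 0)
    (v : Ω → Fin p → ℝ)
    (hvL2 : ∀ j, MemLp (fun ω => v ω j) 2 μ)
    (hindep : IndepFun v ε μ)
    (hvpos : ∀ j, 0 < γ j →
      0 < ∫ ω, (∑ k, U k j * (v ω k - wstar k)) ^ 2 ∂μ) :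
    ∃ lam : Fin p → ℝ, (∀ j, 0 < lam j) ∧
      ∀ what : Ω → Fin p → ℝ,
        (∀ j, MemLp (fun ω => what ω j) 2 μ) →
        (∀ ω w, (n : ℝ)⁻¹ * ∑ i, (X *ᵥ what ω - (X *ᵥ wstar + ε ω)) i ^ 2
              + (what ω - v ω) ⬝ᵥ
                  ((U * Matrix.diagonal lam * Uᵀ) *ᵥ (what ω - v ω))
            ≤ (n : ℝ)⁻¹ * ∑ i, (X *ᵥ w - (X *ᵥ wstar + ε ω)) i ^ 2
              + (w - v ω) ⬝ᵥ
                  ((U * Matrix.diagonal lam * Uᵀ) *ᵥ (w - v ω))) →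
        (∫ ω, ∑ j, (what ω j - wstar j) ^ 2 ∂μ
            ≤ ∫ ω, ∑ j, (v ω j - wstar j) ^ 2 ∂μ)
        ∧ ((∃ j, 0 < γ j) →
            ∫ ω, ∑ j, (what ω j - wstar j) ^ 2 ∂μ
              < ∫ ω, ∑ j, (v ω j - wstar j) ^ 2 ∂μ) := by
  have hn' : (n : ℝ) ≠ 0 := Nat.cast_ne_zero.mpr hn.ne'
  set a : Fin p → ℝ := fun j => ∫ ω, (Uᵀ *ᵥ (v ω - wstar)) j ^ 2 ∂μ
  have ha : ∀ j, 0 < γ j → 0 < a j := hvpos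
  set lam : Fin p → ℝ := fun j => if 0 < γ j then σ2 / n / a j else 1
  have hlam : ∀ j, 0 < lam j := fun j => by
    by_cases hj : 0 < γ j
    · have := ha j hj
      simp only [lam, if_pos hj]
      positivity
    · simp only [lam, if_neg hj, zero_lt_one]
  refine ⟨lam, hlam, fun what hwhat hmin => ?_⟩
  have hlt : ∀ j, 0 < γ j → (σ2 / n * γ j + lam j ^ 2 * a j) / (γ j + lam j) ^ 2 < a j :=
    fun j hj => by
      simpa only [lam, if_pos hj] using shrinkage_risk_lt hj (ha j hj) (by positivity)
  have hle : ∀ j, (σ2 / n * γ j + lam j ^ 2 * a j) / (γ j + lam j) ^ 2 ≤ a j := fun j => by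
    rcases (hγ j).lt_or_eq with hj | hj
    · exact (hlt j hj).le
    · simp [lam, ← hj]
  rw [integral_sum_sq_sub_of_isMin hn' hU hSig hεL2 hmean hcov hvL2 hindep
      (fun j => add_pos_of_nonneg_of_pos (hγ j) (hlam j)) wstar hwhat hmin,
    integral_sum_sq_sub_eq_sum_integral_sq hU hvL2]
  exact ⟨Finset.sum_le_sum fun j _ => hle j, fun ⟨j, hj⟩ =>
    Finset.sum_lt_sum (fun j _ => hle j) ⟨j, Finset.mem_univ j, hlt j hj⟩⟩
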